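/- Let 𝕋 = {z ∈ ℂ : |z| = 1} with normalized Haar probability measure μ, and let (m₁, m₂) be a filter bank of bounded measurable functions on 𝕋: |mᵢ(z)|² + |mᵢ(−z)|² = 2 for a.e. z (i = 1, 2) and conj(m₁(z))·m₂(z) + conj(m₁(−z))·m₂(−z) = 0 for a.e. z. Let Sᵢ = S_{mᵢ} be the operators on L²(𝕋, μ) given by (Sᵢξ)(z) = mᵢ(z)·ξ(z²). Then (S₁, S₂) is a Cuntz family: S₁*S₁ = S₂*S₂ = I, S₁*S₂ = 0, and S₁S₁* + S₂S₂* = I. -/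

import Mathlib

/-!
Parametrise the circle by `UnitAddCircle`: there `z ↦ -z` and `z ↦ z ^ 2` become translation
by `1 / 2` and doubling, so both preserve `haarCircle`. Averaging over `±z` turns
`∫ a(z) G(z²)` into `½ ∫ (a(z) + a(-z)) G(z²)`, which is `(c / 2) ∫ G` when `a(z) + a(-z) = c`;
with `a = conj mᵢ * mⱼ` and `G = conj ξ * η` this gives `⟪Sᵢ ξ, Sⱼ η⟫ = δᵢⱼ ⟪ξ, η⟫`.

For `S₁S₁* + S₂S₂* = I` it suffices that `S₁* η = S₂* η = 0` forces `η = 0`. For such `η` the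
even function `conj η(z) mᵢ(z) + conj η(-z) mᵢ(-z)` is orthogonal to every `ζ(z²)`; being a
function of `z²`, it vanishes. As the matrix `(mᵢ(±z))` has orthogonal rows of norm `√2`, it is
invertible, so `η(z) = η(-z) = 0`.
-/

open MeasureTheory ComplexConjugate ContinuousLinearMap

/-- The normalized Haar (arc-length) probability measure on the unit circle,
realized as a measure on `ℂ`. -/
noncomputable def haarCircle : Measure ℂ :=
  Measure.map (fun t : ℝ => Complex.exp (2 * Real.pi * Complex.I * t))
    (volume.restrict (Set.Ioc (0 : ℝ) 1))

theorem MeasureTheory.MeasurePreserving.integral_comp_of_aestronglyMeasurable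
    {α β E : Type*} [MeasurableSpace α] [MeasurableSpace β] [NormedAddCommGroup E]
    [NormedSpace ℝ E] {μ : Measure α} {ν : Measure β} {f : α → β}
    (hf : MeasurePreserving f μ ν) {g : β → E} (hg : AEStronglyMeasurable g ν) :
    ∫ x, g (f x) ∂μ = ∫ y, g y ∂ν := by
  rw [← hf.map_eq] at hg ⊢
  exact (integral_map hf.measurable.aemeasurable hg).symm

namespace ContinuousLinearMap

variable {𝕜 E F : Type*} [RCLike 𝕜] [NormedAddCommGroup E] [InnerProductSpace 𝕜 E]
  [CompleteSpace E] [NormedAddCommGroup F] [InnerProductSpace 𝕜 F] [CompleteSpace F]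

theorem adjoint_comp_eq_smul_id_of_inner {S T : E →L[𝕜] F} {c : 𝕜}
    (h : ∀ x y, inner 𝕜 (S x) (T y) = c * inner 𝕜 x y) :
    adjoint S ∘L T = c • ContinuousLinearMap.id 𝕜 E := by
  ext y
  refine ext_inner_left 𝕜 fun x => ?_
  rw [comp_apply, adjoint_inner_right, h, smul_apply, id_apply, inner_smul_right]

theorem comp_adjoint_add_comp_adjoint_eq_id {S₁ S₂ : E →L[𝕜] F}
    (h₁ : adjoint S₁ ∘L S₁ = ContinuousLinearMap.id 𝕜 E)
    (h₂ : adjoint S₂ ∘L S₂ = ContinuousLinearMap.id 𝕜 E) (h₁₂ : adjoint S₁ ∘L S₂ = 0)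
    (hker : ∀ η, adjoint S₁ η = 0 → adjoint S₂ η = 0 → η = 0) :
    S₁ ∘L adjoint S₁ + S₂ ∘L adjoint S₂ = ContinuousLinearMap.id 𝕜 F := by
  have h₂₁ : adjoint S₂ ∘L S₁ = 0 := by
    simpa [adjoint_comp] using congrArg adjoint h₁₂
  have e₁ (x) : adjoint S₁ (S₁ x) = x := by simpa using DFunLike.congr_fun h₁ x
  have e₂ (x) : adjoint S₂ (S₂ x) = x := by simpa using DFunLike.congr_fun h₂ x
  have e₁₂ (x) : adjoint S₁ (S₂ x) = 0 := by simpa using DFunLike.congr_fun h₁₂ x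
  have e₂₁ (x) : adjoint S₂ (S₁ x) = 0 := by simpa using DFunLike.congr_fun h₂₁ x
  ext ξ
  have hres := hker (ξ - S₁ (adjoint S₁ ξ) - S₂ (adjoint S₂ ξ))
    (by simp [e₁, e₁₂]) (by simp [e₂, e₂₁])
  rw [sub_sub, sub_eq_zero] at hres
  simpa using hres.symm

end ContinuousLinearMap

theorem eq_zero_of_mul_add_mul_eq_zero_of_orthogonal {a₁ b₁ a₂ b₂ x y : ℂ}
    (h₁ : conj a₁ * a₁ + conj b₁ * b₁ = 2) (h₂ : conj a₂ * a₂ + conj b₂ * b₂ = 2)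
    (h₁₂ : conj a₁ * a₂ + conj b₁ * b₂ = 0)
    (e₁ : x * a₁ + y * b₁ = 0) (e₂ : x * a₂ + y * b₂ = 0) : x = 0 ∧ y = 0 := by
  have h₂₁ : a₁ * conj a₂ + b₁ * conj b₂ = 0 := by
    simpa [mul_comm] using congrArg conj h₁₂
  set d := a₁ * b₂ - a₂ * b₁
  have hd : d * (conj a₁ * conj b₂ - conj a₂ * conj b₁) = 4 := by
    linear_combination
      (conj a₂ * a₂ + conj b₂ * b₂) * h₁ + 2 * h₂ - (a₁ * conj a₂ + b₁ * conj b₂) * h₁₂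
  have hd₀ : d ≠ 0 := left_ne_zero_of_mul (by rw [hd]; norm_num)
  constructor
  · exact (mul_eq_zero.1 (by linear_combination b₂ * e₁ - b₁ * e₂ : x * d = 0)).resolve_right hd₀
  · exact (mul_eq_zero.1 (by linear_combination a₁ * e₂ - a₂ * e₁ : y * d = 0)).resolve_right hd₀

section SquaringInvariantMeasure

variable {μ : Measure ℂ}

theorem integral_add_comp_neg_mul_comp_sq (hneg : MeasurePreserving Neg.neg μ μ) {a G : ℂ → ℂ}
    (hint : Integrable (fun z => a z * G (z ^ 2)) μ) :
    ∫ z, (a z + a (-z)) * G (z ^ 2) ∂μ = 2 * ∫ z, a z * G (z ^ 2) ∂μ := by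
  have hemb : MeasurableEmbedding (Neg.neg : ℂ → ℂ) := (Homeomorph.neg ℂ).measurableEmbedding
  have hint_neg : Integrable (fun z => a (-z) * G (z ^ 2)) μ := by
    simpa [Function.comp_def] using (hneg.integrable_comp_emb hemb).2 hint
  have hneg_eq : ∫ z, a (-z) * G (z ^ 2) ∂μ = ∫ z, a z * G (z ^ 2) ∂μ := by
    have h := hneg.integral_comp hemb (fun z => a z * G (z ^ 2))
    simp only [neg_sq] at h
    exact h
  simp_rw [add_mul]
  rw [integral_add hint hint_neg, hneg_eq, two_mul]

theorem inner_apply_apply_of_ae_conj_mul_add_conj_mul_neg_eq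
    (hneg : MeasurePreserving Neg.neg μ μ) (hsq : MeasurePreserving (· ^ 2) μ μ)
    {m m' : ℂ → ℂ} {c : ℂ} (hc : ∀ᵐ z ∂μ, conj (m z) * m' z + conj (m (-z)) * m' (-z) = c)
    {S T : Lp ℂ 2 μ →L[ℂ] Lp ℂ 2 μ}
    (hS : ∀ ξ : Lp ℂ 2 μ, ⇑(S ξ) =ᵐ[μ] fun z => m z * ξ (z ^ 2))
    (hT : ∀ ξ : Lp ℂ 2 μ, ⇑(T ξ) =ᵐ[μ] fun z => m' z * ξ (z ^ 2)) (ξ η : Lp ℂ 2 μ) :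
    inner ℂ (S ξ) (T η) = c / 2 * inner ℂ ξ η := by
  set a : ℂ → ℂ := fun z => conj (m z) * m' z
  set G : ℂ → ℂ := fun w => conj (ξ w) * η w
  have hpt : (fun z => inner ℂ (S ξ z) (T η z)) =ᵐ[μ] fun z => a z * G (z ^ 2) := by
    filter_upwards [hS ξ, hT η] with z hSz hTz
    simp only [RCLike.inner_apply', hSz, hTz, map_mul, a, G]
    ring
  have hint : Integrable (fun z => a z * G (z ^ 2)) μ :=
    (L2.integrable_inner (S ξ) (T η)).congr hpt
  have hG : AEStronglyMeasurable G μ :=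
    (Lp.aestronglyMeasurable ξ).star.mul (Lp.aestronglyMeasurable η)
  calc inner ℂ (S ξ) (T η) = ∫ z, a z * G (z ^ 2) ∂μ := integral_congr_ae hpt
    _ = 1 / 2 * ∫ z, (a z + a (-z)) * G (z ^ 2) ∂μ := by
      rw [integral_add_comp_neg_mul_comp_sq hneg hint]; ring
    _ = 1 / 2 * ∫ z, c * G (z ^ 2) ∂μ := by
      congr 1
      exact integral_congr_ae (hc.mono fun z hz => by simp only [a, hz])
    _ = c / 2 * inner ℂ ξ η := by
      rw [integral_const_mul, hsq.integral_comp_of_aestronglyMeasurable hG]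
      simp only [L2.inner_def, RCLike.inner_apply', G]
      ring

theorem ae_eq_zero_of_even_of_forall_integral_mul_comp_sq_eq_zero [IsFiniteMeasure μ]
    (hsq : MeasurePreserving (· ^ 2) μ μ) {h : ℂ → ℂ} (hmeas : StronglyMeasurable h)
    (heven : ∀ z, h (-z) = h z) (hint : Integrable h μ)
    (horth : ∀ ζ : Lp ℂ 2 μ, ∫ z, h z * ζ (z ^ 2) ∂μ = 0) : h =ᵐ[μ] 0 := by
  -- being even, `h` factors through squaring via the principal square root
  set k : ℂ → ℂ := fun w => h (w ^ (2⁻¹ : ℂ))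
  have hk_sq : ∀ z, k (z ^ 2) = h z := by
    intro z
    have hsqrt := Complex.cpow_nat_inv_pow (z ^ 2) two_ne_zero
    rw [Nat.cast_ofNat] at hsqrt
    rcases sq_eq_sq_iff_eq_or_eq_neg.1 hsqrt with hz | hz <;> simp only [k, hz, heven]
  have hk_meas : AEStronglyMeasurable k μ :=
    (hmeas.comp_measurable (measurable_id.pow_const _)).aestronglyMeasurable
  have hk_int : Integrable k μ :=
    (hsq.integrable_comp hk_meas).1 (by simpa [Function.comp_def, hk_sq] using hint)
  have hk_zero : k =ᵐ[μ] 0 := by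
    refine hk_int.ae_eq_zero_of_forall_setIntegral_eq_zero fun s hs _ => ?_
    set ζ : Lp ℂ 2 μ := indicatorConstLp 2 hs (measure_ne_top μ s) 1
    have hζ : (fun z => ζ (z ^ 2)) =ᵐ[μ] fun z => s.indicator 1 (z ^ 2) :=
      hsq.quasiMeasurePreserving.ae_eq_comp indicatorConstLp_coeFn
    calc ∫ w in s, k w ∂μ = ∫ z, s.indicator k (z ^ 2) ∂μ := by
          rw [← integral_indicator hs,
            hsq.integral_comp_of_aestronglyMeasurable (hk_meas.indicator hs)]
      _ = ∫ z, h z * ζ (z ^ 2) ∂μ := by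
          refine integral_congr_ae ?_
          filter_upwards [hζ] with z hz
          rw [hz]
          by_cases hzs : z ^ 2 ∈ s <;> simp [hzs, hk_sq]
      _ = 0 := horth ζ
  filter_upwards [hsq.quasiMeasurePreserving.ae_eq_comp hk_zero] with z hz
  simpa [hk_sq] using hz

theorem ae_conj_mul_add_conj_mul_neg_eq_zero_of_adjoint_apply_eq_zero [IsFiniteMeasure μ]
    (hneg : MeasurePreserving Neg.neg μ μ) (hsq : MeasurePreserving (· ^ 2) μ μ)
    {m : ℂ → ℂ} (hm : Measurable m) {S : Lp ℂ 2 μ →L[ℂ] Lp ℂ 2 μ}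
    (hS : ∀ ξ : Lp ℂ 2 μ, ⇑(S ξ) =ᵐ[μ] fun z => m z * ξ (z ^ 2))
    {η : Lp ℂ 2 μ} (hη : adjoint S η = 0) :
    ∀ᵐ z ∂μ, conj (η z) * m z + conj (η (-z)) * m (-z) = 0 := by
  set b : ℂ → ℂ := fun z => conj (η z) * m z
  have hpt (ζ : Lp ℂ 2 μ) :
      (fun z => inner ℂ (η z) (S ζ z)) =ᵐ[μ] fun z => b z * ζ (z ^ 2) := by
    filter_upwards [hS ζ] with z hz
    simp only [RCLike.inner_apply', hz, b, mul_assoc]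
  have hint (ζ : Lp ℂ 2 μ) : Integrable (fun z => b z * ζ (z ^ 2)) μ :=
    (L2.integrable_inner η (S ζ)).congr (hpt ζ)
  have hb_int : Integrable b μ := by
    refine (hint (Lp.const 2 μ 1)).congr ?_
    filter_upwards [hsq.quasiMeasurePreserving.ae_eq_comp (Lp.coeFn_const 2 μ (1 : ℂ))]
      with z hz
    simp only [Function.comp_apply] at hz
    rw [hz, Function.const_apply, mul_one]
  have horth (ζ : Lp ℂ 2 μ) : ∫ z, (b z + b (-z)) * ζ (z ^ 2) ∂μ = 0 := by
    have hzero : ∫ z, b z * ζ (z ^ 2) ∂μ = 0 := by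
      rw [← integral_congr_ae (hpt ζ), ← L2.inner_def, ← adjoint_inner_left, hη, inner_zero_left]
    rw [integral_add_comp_neg_mul_comp_sq hneg (hint ζ), hzero, mul_zero]
  have hmeas : StronglyMeasurable fun z => b z + b (-z) := by
    have hb : StronglyMeasurable b :=
      (Lp.stronglyMeasurable η).star.mul hm.stronglyMeasurable
    exact hb.add (hb.comp_measurable measurable_neg)
  refine ae_eq_zero_of_even_of_forall_integral_mul_comp_sq_eq_zero hsq hmeas
    (fun z => by simp only [neg_neg, add_comm]) ?_ horth
  exact hb_int.add ((hneg.integrable_comp_emb (Homeomorph.neg ℂ).measurableEmbedding).2 hb_int)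

theorem eq_zero_of_adjoint_apply_eq_zero_of_ae_orthogonal [IsFiniteMeasure μ]
    (hneg : MeasurePreserving Neg.neg μ μ) (hsq : MeasurePreserving (· ^ 2) μ μ)
    {m₁ m₂ : ℂ → ℂ} (hm₁ : Measurable m₁) (hm₂ : Measurable m₂)
    (hf₁ : ∀ᵐ z ∂μ, conj (m₁ z) * m₁ z + conj (m₁ (-z)) * m₁ (-z) = 2)
    (hf₂ : ∀ᵐ z ∂μ, conj (m₂ z) * m₂ z + conj (m₂ (-z)) * m₂ (-z) = 2)
    (horth : ∀ᵐ z ∂μ, conj (m₁ z) * m₂ z + conj (m₁ (-z)) * m₂ (-z) = 0)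
    {S₁ S₂ : Lp ℂ 2 μ →L[ℂ] Lp ℂ 2 μ}
    (hS₁ : ∀ ξ : Lp ℂ 2 μ, ⇑(S₁ ξ) =ᵐ[μ] fun z => m₁ z * ξ (z ^ 2))
    (hS₂ : ∀ ξ : Lp ℂ 2 μ, ⇑(S₂ ξ) =ᵐ[μ] fun z => m₂ z * ξ (z ^ 2))
    {η : Lp ℂ 2 μ} (h₁ : adjoint S₁ η = 0) (h₂ : adjoint S₂ η = 0) : η = 0 := by
  rw [Lp.eq_zero_iff_ae_eq_zero]
  filter_upwards
    [ae_conj_mul_add_conj_mul_neg_eq_zero_of_adjoint_apply_eq_zero hneg hsq hm₁ hS₁ h₁,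
      ae_conj_mul_add_conj_mul_neg_eq_zero_of_adjoint_apply_eq_zero hneg hsq hm₂ hS₂ h₂,
      hf₁, hf₂, horth] with z hk₁ hk₂ hf₁z hf₂z horthz
  simpa using (eq_zero_of_mul_add_mul_eq_zero_of_orthogonal hf₁z hf₂z horthz hk₁ hk₂).1

end SquaringInvariantMeasure

theorem measurePreserving_toCircle_haarCircle :
    MeasurePreserving (fun x : UnitAddCircle => (x.toCircle : ℂ)) volume haarCircle := by
  have hE : Measurable (fun x : UnitAddCircle => (x.toCircle : ℂ)) :=
    (continuous_subtype_val.comp AddCircle.continuous_toCircle).measurable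
  refine ⟨hE, ?_⟩
  have hmk := (UnitAddCircle.measurePreserving_mk 0).map_eq
  rw [zero_add] at hmk
  rw [← hmk, Measure.map_map hE (by fun_prop), haarCircle]
  congr 1
  funext t
  simp [AddCircle.toCircle_apply_mk, Circle.coe_exp]
  ring_nf

instance : IsFiniteMeasure haarCircle := by
  rw [← measurePreserving_toCircle_haarCircle.map_eq]
  infer_instance

theorem measurePreserving_neg_haarCircle : MeasurePreserving Neg.neg haarCircle haarCircle :=
  measurePreserving_toCircle_haarCircle.of_semiconj
    (measurePreserving_add_right volume ((1 / 2 : ℝ) : UnitAddCircle))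
    (fun x => by
      have h : 2 * (Real.pi : ℂ) * 2⁻¹ * Complex.I = Real.pi * Complex.I := by ring
      simp [AddCircle.toCircle_add, AddCircle.toCircle_apply_mk, Circle.coe_exp, h])
    measurable_neg

theorem measurePreserving_sq_haarCircle : MeasurePreserving (· ^ 2) haarCircle haarCircle :=
  measurePreserving_toCircle_haarCircle.of_semiconj
    (AddCircle.ergodic_nsmul one_lt_two).toMeasurePreserving
    (fun x => by simp [AddCircle.toCircle_nsmul])
    (measurable_id.pow_const 2)

theorem stmt8_general (m₁ m₂ : ℂ → ℂ) (h₁meas : Measurable m₁) (h₂meas : Measurable m₂)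
    (hfil₁ : ∀ᵐ z ∂haarCircle,
      ‖m₁ z‖ ^ 2 + ‖m₁ (-z)‖ ^ 2 = 2)
    (hfil₂ : ∀ᵐ z ∂haarCircle,
      ‖m₂ z‖ ^ 2 + ‖m₂ (-z)‖ ^ 2 = 2)
    (horth : ∀ᵐ z ∂haarCircle,
      conj (m₁ z) * m₂ z + conj (m₁ (-z)) * m₂ (-z) = 0)
    (S₁ S₂ : Lp ℂ 2 haarCircle →L[ℂ] Lp ℂ 2 haarCircle)
    (hS₁ : ∀ ξ : Lp ℂ 2 haarCircle, ⇑(S₁ ξ) =ᵐ[haarCircle] fun z => m₁ z * ξ (z ^ 2))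
    (hS₂ : ∀ ξ : Lp ℂ 2 haarCircle, ⇑(S₂ ξ) =ᵐ[haarCircle] fun z => m₂ z * ξ (z ^ 2)) :
    (adjoint S₁).comp S₁ = ContinuousLinearMap.id ℂ (Lp ℂ 2 haarCircle) ∧
    (adjoint S₂).comp S₂ = ContinuousLinearMap.id ℂ (Lp ℂ 2 haarCircle) ∧
    (adjoint S₁).comp S₂ = 0 ∧
    S₁.comp (adjoint S₁) + S₂.comp (adjoint S₂) =
      ContinuousLinearMap.id ℂ (Lp ℂ 2 haarCircle) := by
  have hneg := measurePreserving_neg_haarCircle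
  have hsq := measurePreserving_sq_haarCircle
  have hconj (m : ℂ → ℂ) (h : ∀ᵐ z ∂haarCircle, ‖m z‖ ^ 2 + ‖m (-z)‖ ^ 2 = 2) :
      ∀ᵐ z ∂haarCircle, conj (m z) * m z + conj (m (-z)) * m (-z) = 2 :=
    h.mono fun z hz => by rw [Complex.conj_mul', Complex.conj_mul']; exact_mod_cast hz
  have hS₁₁ : (adjoint S₁).comp S₁ = ContinuousLinearMap.id ℂ (Lp ℂ 2 haarCircle) := by
    simpa using adjoint_comp_eq_smul_id_of_inner
      (inner_apply_apply_of_ae_conj_mul_add_conj_mul_neg_eq hneg hsq (hconj m₁ hfil₁) hS₁ hS₁)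
  have hS₂₂ : (adjoint S₂).comp S₂ = ContinuousLinearMap.id ℂ (Lp ℂ 2 haarCircle) := by
    simpa using adjoint_comp_eq_smul_id_of_inner
      (inner_apply_apply_of_ae_conj_mul_add_conj_mul_neg_eq hneg hsq (hconj m₂ hfil₂) hS₂ hS₂)
  have hS₁₂ : (adjoint S₁).comp S₂ = 0 := by
    simpa using adjoint_comp_eq_smul_id_of_inner
      (inner_apply_apply_of_ae_conj_mul_add_conj_mul_neg_eq hneg hsq horth hS₁ hS₂)
  refine ⟨hS₁₁, hS₂₂, hS₁₂, comp_adjoint_add_comp_adjoint_eq_id hS₁₁ hS₂₂ hS₁₂ fun η h₁ h₂ => ?_⟩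
  exact eq_zero_of_adjoint_apply_eq_zero_of_ae_orthogonal hneg hsq h₁meas h₂meas
    (hconj m₁ hfil₁) (hconj m₂ hfil₂) horth hS₁ hS₂ h₁ h₂

/-- If `(m₁, m₂)` is a filter bank of bounded measurable functions on the circle and
`(Sᵢ ξ)(z) = mᵢ(z) ξ(z²)` on `L²(𝕋, μ)`, then `(S₁, S₂)` is a Cuntz family:
`S₁*S₁ = S₂*S₂ = I`, `S₁*S₂ = 0`, and `S₁S₁* + S₂S₂* = I`. -/
theorem stmt8 (m₁ m₂ : ℂ → ℂ) (h₁meas : Measurable m₁) (h₂meas : Measurable m₂)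
    (h₁bd : ∃ C : ℝ, ∀ᵐ z ∂haarCircle, ‖m₁ z‖ ≤ C)
    (h₂bd : ∃ C : ℝ, ∀ᵐ z ∂haarCircle, ‖m₂ z‖ ≤ C)
    (hfil₁ : ∀ᵐ z ∂haarCircle,
      ‖m₁ z‖ ^ 2 + ‖m₁ (-z)‖ ^ 2 = 2)
    (hfil₂ : ∀ᵐ z ∂haarCircle,
      ‖m₂ z‖ ^ 2 + ‖m₂ (-z)‖ ^ 2 = 2)
    (horth : ∀ᵐ z ∂haarCircle,
      conj (m₁ z) * m₂ z + conj (m₁ (-z)) * m₂ (-z) = 0)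
    (S₁ S₂ : Lp ℂ 2 haarCircle →L[ℂ] Lp ℂ 2 haarCircle)
    (hS₁ : ∀ ξ : Lp ℂ 2 haarCircle, ⇑(S₁ ξ) =ᵐ[haarCircle] fun z => m₁ z * ξ (z ^ 2))
    (hS₂ : ∀ ξ : Lp ℂ 2 haarCircle, ⇑(S₂ ξ) =ᵐ[haarCircle] fun z => m₂ z * ξ (z ^ 2)) :
    (adjoint S₁).comp S₁ = ContinuousLinearMap.id ℂ (Lp ℂ 2 haarCircle) ∧
    (adjoint S₂).comp S₂ = ContinuousLinearMap.id ℂ (Lp ℂ 2 haarCircle) ∧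
    (adjoint S₁).comp S₂ = 0 ∧
    S₁.comp (adjoint S₁) + S₂.comp (adjoint S₂) =
      ContinuousLinearMap.id ℂ (Lp ℂ 2 haarCircle) :=
  stmt8_general m₁ m₂ h₁meas h₂meas hfil₁ hfil₂ horth S₁ S₂ hS₁ hS₂
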